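/- Let p > 1 and p* = p/(p−1). With the dual (kernel-matrix) representation of the L_p-norm MKL multi-task Rademacher complexity, and v_t = (tr K_t^1, …, tr K_t^M) ∈ ℝ^M for each task t, the following bound holds: R(F_λ) ≤ (2√(2 R p*) / (TN)) · √( ∑_{t=1}^T (1/λ_t) ‖v_t‖_{p*} ), where ‖·‖_{p*} is the ℓ_{p*} norm on ℝ^M. -/

import Mathlib

open Matrix

/-- The `±1` sign vector associated with a Boolean pattern. -/
noncomputable def sgnVec {N : ℕ} (σ : Fin N → Bool) : Fin N → ℝ :=
  fun i => if σ i then 1 else -1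

/-- The combined kernel matrix `K_t(θ) = ∑_m θ_m K_t^m`. -/
noncomputable def mixKernel {T N M : ℕ}
    (K : Fin T → Fin M → Matrix (Fin N) (Fin N) ℝ) (θ : Fin M → ℝ) (t : Fin T) :
    Matrix (Fin N) (Fin N) ℝ :=
  ∑ m, θ m • K t m

/-- The dual (kernel-matrix) representation of the empirical Rademacher complexity of the
`L_p`-norm MKL multi-task hypothesis class `F_λ`:
`R(F_λ) = (2/(TN)) E_σ[ sup_{θ ⪰ 0, ‖θ‖_p ≤ 1}
  sup{ ∑_t (1/√λ_t) σ_t' K_t(θ) α_t : ∑_t α_t' K_t(θ) α_t ≤ R } ]`,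
the expectation being the average over all sign patterns `σ ∈ {±1}^{T×N}`. -/
noncomputable def dualRadComplexity {T N M : ℕ}
    (K : Fin T → Fin M → Matrix (Fin N) (Fin N) ℝ) (R : ℝ) (lam : Fin T → ℝ)
    (p : ℝ) : ℝ :=
  (2 / (T * N)) * ((1 / 2 ^ (T * N)) *
    ∑ σ : Fin T → Fin N → Bool,
      sSup {v : ℝ | ∃ θ : Fin M → ℝ, (∀ m, 0 ≤ θ m) ∧ (∑ m, θ m ^ p) ^ (1 / p) ≤ 1 ∧
        ∃ α : Fin T → Fin N → ℝ,
          (∑ t, α t ⬝ᵥ (mixKernel K θ t).mulVec (α t)) ≤ R ∧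
          v = ∑ t, (1 / Real.sqrt (lam t)) *
            (sgnVec (σ t) ⬝ᵥ (mixKernel K θ t).mulVec (α t))})

open scoped MatrixOrder in
theorem Matrix.posSemidef_iff_eq_transpose_mul_self {N : ℕ} {A : Matrix (Fin N) (Fin N) ℝ} :
    A.PosSemidef ↔ ∃ B : Matrix (Fin N) (Fin N) ℝ, A = Bᴴ * B := by
  classical
  constructor
  · intro hA
    obtain ⟨B, hB⟩ := CStarAlgebra.nonneg_iff_eq_star_mul_self.mp hA.nonneg
    exact ⟨B, hB⟩
  · rintro ⟨B, rfl⟩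
    exact Matrix.posSemidef_conjTranspose_mul_self B

namespace MKL

open Finset

/-- `df n = (2n-1)!! = ∏_{k<n} (2k+1)`. -/
def df (n : ℕ) : ℕ := ∏ k ∈ Finset.range n, (2 * k + 1)

lemma df_mul (n : ℕ) : df n * (2 ^ n * n.factorial) = (2 * n).factorial := by
  induction n with
  | zero => simp [df]
  | succ n ih =>
    have : df (n + 1) = df n * (2 * n + 1) := by
      simp [df, Finset.prod_range_succ]
    rw [this, Nat.factorial_succ, pow_succ]
    have h2 : 2 * (n + 1) = (2 * n + 1) + 1 := by ring
    rw [h2, Nat.factorial_succ, Nat.factorial_succ]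
    calc df n * (2 * n + 1) * (2 ^ n * 2 * ((n + 1) * n.factorial))
        = ((2 * n + 1) * (2 * (n + 1))) * (df n * (2 ^ n * n.factorial)) := by ring
      _ = ((2 * n + 1) + 1) * ((2 * n + 1) * (2 * n).factorial) := by rw [ih]; ring

lemma one_le_df (n : ℕ) : 1 ≤ df n := by
  apply Nat.one_le_iff_ne_zero.mpr
  simp only [df, Finset.prod_ne_zero_iff]
  intro k _; omega

lemma coeff_ineq {j n : ℕ} (h : j ≤ n) :
    (2 * n).choose (2 * j) * df (n - j) ≤ df n * n.choose j := by
  have hM : 0 < 2 ^ n * (Nat.factorial j * (Nat.factorial (n - j) * Nat.factorial (2 * j))) := by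
    positivity
  apply Nat.le_of_mul_le_mul_right _ hM
  have h2j : 2 * j ≤ 2 * n := by omega
  have hsub : 2 * n - 2 * j = 2 * (n - j) := by omega
  have e1 : (2 * n).choose (2 * j) * Nat.factorial (2 * j) * Nat.factorial (2 * (n - j))
      = (2 * n).factorial := by
    rw [← hsub]; exact Nat.choose_mul_factorial_mul_factorial h2j
  have e2 : df (n - j) * (2 ^ (n - j) * Nat.factorial (n - j)) = (2 * (n - j)).factorial :=
    df_mul (n - j)
  have e3 : df n * (2 ^ n * n.factorial) = (2 * n).factorial := df_mul n
  have e4 : n.choose j * Nat.factorial j * Nat.factorial (n - j) = n.factorial :=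
    Nat.choose_mul_factorial_mul_factorial h
  have e5 : df j * (2 ^ j * Nat.factorial j) = (2 * j).factorial := df_mul j
  have hpow : 2 ^ n = 2 ^ j * 2 ^ (n - j) := by
    rw [← pow_add]; congr 1; omega
  calc (2 * n).choose (2 * j) * df (n - j) *
        (2 ^ n * (Nat.factorial j * (Nat.factorial (n - j) * Nat.factorial (2 * j))))
      = ((2 * n).choose (2 * j) * Nat.factorial (2 * j) * ((df (n - j)) * (2 ^ (n - j) * Nat.factorial (n - j)))) * (2 ^ j * Nat.factorial j) := by
        rw [hpow]; ring
    _ = (2 * n).factorial * (2 ^ j * Nat.factorial j) := by rw [e2, e1]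
    _ ≤ (2 * n).factorial * Nat.factorial (2 * j) := by
        apply Nat.mul_le_mul_left
        calc 2 ^ j * Nat.factorial j = 1 * (2 ^ j * Nat.factorial j) := (one_mul _).symm
          _ ≤ df j * (2 ^ j * Nat.factorial j) := Nat.mul_le_mul_right _ (one_le_df j)
          _ = (2 * j).factorial := e5
    _ = df n * n.choose j *
        (2 ^ n * (Nat.factorial j * (Nat.factorial (n - j) * Nat.factorial (2 * j)))) := by
        rw [← e3, ← e4]; ring


lemma sum_range_even (n : ℕ) (g : ℕ → ℝ) (hg : ∀ k, Odd k → g k = 0) :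
    ∑ k ∈ range (2 * n + 1), g k = ∑ j ∈ range (n + 1), g (2 * j) := by
  induction n with
  | zero => simp
  | succ n ih =>
    have h1 : 2 * (n + 1) + 1 = (2 * n + 1) + 1 + 1 := by ring
    rw [h1, Finset.sum_range_succ, Finset.sum_range_succ, ih,
      hg (2 * n + 1) ⟨n, by ring⟩, Finset.sum_range_succ (fun j => g (2 * j)) (n + 1)]
    have h2 : 2 * (n + 1) = 2 * n + 2 := by ring
    rw [h2]; ring

lemma even_pow_sum (x y : ℝ) (n : ℕ) :
    (x + y) ^ (2 * n) + (x - y) ^ (2 * n) =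
      2 * ∑ j ∈ range (n + 1), ((2 * n).choose (2 * j) : ℝ) * x ^ (2 * (n - j)) * y ^ (2 * j) := by
  have hxy : x + y = y + x := by ring
  have hxy' : x - y = -y + x := by ring
  rw [hxy, hxy', add_pow, add_pow, ← Finset.sum_add_distrib]
  have key : ∀ k ∈ range (2 * n + 1),
      y ^ k * x ^ (2 * n - k) * ((2 * n).choose k : ℝ)
        + (-y) ^ k * x ^ (2 * n - k) * ((2 * n).choose k : ℝ)
      = (fun k => (1 + (-1:ℝ) ^ k) * ((2 * n).choose k : ℝ) * x ^ (2 * n - k) * y ^ k) k := by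
    intro k _
    rw [neg_pow y k]
    ring
  rw [Finset.sum_congr rfl key, sum_range_even]
  · rw [Finset.mul_sum]
    apply Finset.sum_congr rfl
    intro j hj
    rw [Even.neg_one_pow ⟨j, by ring⟩]
    have h3 : 2 * n - 2 * j = 2 * (n - j) := by omega
    rw [h3]; ring
  · intro k hk
    rw [Odd.neg_one_pow hk]
    ring

/-- Scalar Khintchine inequality, `Fin` version. -/
lemma khintchine_fin (NN : ℕ) : ∀ (n : ℕ) (v : Fin NN → ℝ),
    ∑ σ : Fin NN → Bool, (∑ i, v i * (if σ i then (1:ℝ) else -1)) ^ (2 * n)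
      ≤ 2 ^ NN * df n * (∑ i, (v i) ^ 2) ^ n := by
  induction NN with
  | zero =>
    intro n v
    match n with
    | 0 => simp [df]
    | n + 1 => simp
  | succ NN ih =>
    intro n v
    set w : Fin NN → ℝ := fun i => v i.succ with hw
    set F : (Fin (NN + 1) → Bool) → ℝ :=
      fun σ => (∑ i, v i * (if σ i then (1:ℝ) else -1)) ^ (2 * n) with hF
    let e : (Bool × (Fin NN → Bool)) ≃ (Fin (NN + 1) → Bool) := Fin.consEquiv (fun _ => Bool)
    rw [← Equiv.sum_comp e F]
    rw [Fintype.sum_prod_type]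
    set X : (Fin NN → Bool) → ℝ := fun τ => ∑ i, w i * (if τ i then (1:ℝ) else -1) with hX
    have hsplit : ∀ (b : Bool) (τ : Fin NN → Bool),
        F (e (b, τ)) = (X τ + (if b then (1:ℝ) else -1) * v 0) ^ (2 * n) := by
      intro b τ
      have h0 : e (b, τ) = Fin.cons b τ := rfl
      simp only [hF, h0]
      congr 1
      rw [Fin.sum_univ_succ]
      simp only [Fin.cons_zero, Fin.cons_succ, hX, hw]
      ring
    have hr' : (0:ℝ) ≤ ∑ i, w i ^ 2 := Finset.sum_nonneg fun i _ => sq_nonneg _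
    calc ∑ b : Bool, ∑ τ : Fin NN → Bool, F (e (b, τ))
        = ∑ τ : Fin NN → Bool, 2 * ∑ j ∈ range (n + 1), ((2 * n).choose (2 * j) : ℝ)
            * (X τ) ^ (2 * (n - j)) * (v 0) ^ (2 * j) := by
          rw [Finset.sum_comm]
          apply Finset.sum_congr rfl
          intro τ _
          rw [Fintype.sum_bool, hsplit, hsplit]
          rw [show X τ + (if false then (1:ℝ) else -1) * v 0 = X τ - v 0 by
                rw [if_neg (by simp)]; ring,
              show X τ + (if true then (1:ℝ) else -1) * v 0 = X τ + v 0 by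
                rw [if_pos rfl]; ring]
          exact even_pow_sum _ _ n
      _ = 2 * ∑ j ∈ range (n + 1), (((2 * n).choose (2 * j) : ℝ) * (v 0) ^ (2 * j))
            * ∑ τ : Fin NN → Bool, (X τ) ^ (2 * (n - j)) := by
          rw [← Finset.mul_sum, Finset.sum_comm]
          congr 1
          apply Finset.sum_congr rfl
          intro j _
          rw [Finset.mul_sum]
          apply Finset.sum_congr rfl
          intro τ _
          ring
      _ ≤ 2 * ∑ j ∈ range (n + 1), (((2 * n).choose (2 * j) : ℝ) * (v 0) ^ (2 * j))
            * (2 ^ NN * df (n - j) * (∑ i, w i ^ 2) ^ (n - j)) := by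
          apply mul_le_mul_of_nonneg_left _ (by norm_num : (0:ℝ) ≤ 2)
          apply Finset.sum_le_sum
          intro j _
          apply mul_le_mul_of_nonneg_left (ih (n - j) w)
          exact mul_nonneg (Nat.cast_nonneg _) (Even.pow_nonneg ⟨j, by ring⟩ _)
      _ ≤ 2 * ∑ j ∈ range (n + 1), ((df n : ℝ) * (n.choose j : ℝ) * (v 0) ^ (2 * j))
            * (2 ^ NN * (∑ i, w i ^ 2) ^ (n - j)) := by
          apply mul_le_mul_of_nonneg_left _ (by norm_num : (0:ℝ) ≤ 2)
          apply Finset.sum_le_sum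
          intro j hj
          have hj' : j ≤ n := by
            have := Finset.mem_range.mp hj; omega
          have hc : (((2 * n).choose (2 * j) : ℝ)) * (df (n - j) : ℝ)
              ≤ (df n : ℝ) * (n.choose j : ℝ) := by
            have := (Nat.cast_le (α := ℝ)).mpr (coeff_ineq hj')
            push_cast at this
            linarith
          have h1 : (0:ℝ) ≤ (v 0) ^ (2 * j) := Even.pow_nonneg ⟨j, by ring⟩ _
          have h2 : (0:ℝ) ≤ (∑ i, w i ^ 2) ^ (n - j) := pow_nonneg hr' _
          calc ((2 * n).choose (2 * j) : ℝ) * (v 0) ^ (2 * j)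
                * (2 ^ NN * (df (n - j) : ℝ) * (∑ i, w i ^ 2) ^ (n - j))
              = (((2 * n).choose (2 * j) : ℝ) * (df (n - j) : ℝ))
                * ((v 0) ^ (2 * j) * (2 ^ NN * (∑ i, w i ^ 2) ^ (n - j))) := by ring
            _ ≤ ((df n : ℝ) * (n.choose j : ℝ))
                * ((v 0) ^ (2 * j) * (2 ^ NN * (∑ i, w i ^ 2) ^ (n - j))) := by
                apply mul_le_mul_of_nonneg_right hc
                positivity
            _ = (df n : ℝ) * (n.choose j : ℝ) * (v 0) ^ (2 * j)
                * (2 ^ NN * (∑ i, w i ^ 2) ^ (n - j)) := by ring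
      _ = 2 ^ (NN + 1) * df n * ∑ j ∈ range (n + 1),
            ((v 0) ^ 2) ^ j * (∑ i, w i ^ 2) ^ (n - j) * (n.choose j : ℝ) := by
          rw [Finset.mul_sum, Finset.mul_sum]
          apply Finset.sum_congr rfl
          intro j _
          rw [pow_mul]
          ring
      _ = 2 ^ (NN + 1) * df n * (∑ i, (v i) ^ 2) ^ n := by
          rw [← add_pow]
          congr 1
          rw [Fin.sum_univ_succ]


/-- Scalar Khintchine inequality over an arbitrary finite index type. -/
lemma khintchine {ι : Type*} [Fintype ι] [DecidableEq ι] (n : ℕ) (v : ι → ℝ) :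
    ∑ σ : ι → Bool, (∑ i, v i * (if σ i then (1:ℝ) else -1)) ^ (2 * n)
      ≤ 2 ^ (Fintype.card ι) * df n * (∑ i, (v i) ^ 2) ^ n := by
  classical
  let e : ι ≃ Fin (Fintype.card ι) := Fintype.equivFin ι
  have h1 : ∑ σ : ι → Bool, (∑ i, v i * (if σ i then (1:ℝ) else -1)) ^ (2 * n)
      = ∑ τ : Fin (Fintype.card ι) → Bool,
          (∑ j, v (e.symm j) * (if τ j then (1:ℝ) else -1)) ^ (2 * n) := by
    apply Fintype.sum_equiv (Equiv.arrowCongr e (Equiv.refl Bool))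
    intro σ
    congr 1
    apply Fintype.sum_equiv e
    intro i
    simp
  rw [h1]
  calc ∑ τ : Fin (Fintype.card ι) → Bool,
        (∑ j, v (e.symm j) * (if τ j then (1:ℝ) else -1)) ^ (2 * n)
      ≤ 2 ^ (Fintype.card ι) * df n * (∑ j, (v (e.symm j)) ^ 2) ^ n :=
        khintchine_fin _ n _
    _ = 2 ^ (Fintype.card ι) * df n * (∑ i, (v i) ^ 2) ^ n := by
        congr 2
        exact (Fintype.sum_equiv e (fun i => (v i) ^ 2) (fun j => (v (e.symm j)) ^ 2)
          (fun i => by simp)).symm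

lemma df_le_pow (n : ℕ) : (df n : ℝ) ≤ (n : ℝ) ^ n := by
  induction n with
  | zero => simp [df]
  | succ n ih =>
    have hdf : df (n + 1) = df n * (2 * n + 1) := by simp [df, Finset.prod_range_succ]
    rcases Nat.eq_zero_or_pos n with rfl | hn
    · simp [hdf, df]
    have hn' : (0:ℝ) < n := by exact_mod_cast hn
    have hb : 2 * (n:ℝ) ^ n ≤ ((n:ℝ) + 1) ^ n := by
      have h2 : (2:ℝ) ≤ (1 + 1 / (n:ℝ)) ^ n := by
        have hb1 := one_add_mul_le_pow
          (show (-2:ℝ) ≤ 1 / n by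
            have : (0:ℝ) ≤ 1 / n := by positivity
            linarith) n
        have he : (n:ℝ) * (1 / n) = 1 := by field_simp
        rw [he] at hb1
        linarith
      calc 2 * (n:ℝ) ^ n ≤ (1 + 1 / (n:ℝ)) ^ n * (n:ℝ) ^ n := by
            apply mul_le_mul_of_nonneg_right h2 (by positivity)
        _ = ((1 + 1 / (n:ℝ)) * n) ^ n := by rw [mul_pow]
        _ = ((n:ℝ) + 1) ^ n := by congr 1; field_simp
    have : (df (n + 1) : ℝ) = (df n : ℝ) * (2 * n + 1) := by exact_mod_cast hdf
    rw [this]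
    push_cast
    calc (df n : ℝ) * (2 * n + 1) ≤ (n:ℝ) ^ n * (2 * n + 1) := by
          apply mul_le_mul_of_nonneg_right ih (by positivity)
      _ ≤ ((n:ℝ) + 1) ^ n * ((n:ℝ) + 1) := by
          calc (n:ℝ) ^ n * (2 * n + 1) ≤ (n:ℝ) ^ n * (2 * n + 2) := by
                apply mul_le_mul_of_nonneg_left (by linarith) (by positivity)
            _ = 2 * (n:ℝ) ^ n * ((n:ℝ) + 1) := by ring
            _ ≤ ((n:ℝ) + 1) ^ n * ((n:ℝ) + 1) := by
                apply mul_le_mul_of_nonneg_right hb (by positivity)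
      _ = ((n:ℝ) + 1) ^ (n + 1) := by rw [pow_succ]

/-- Moment bound for a positive-semidefinite quadratic form in Rademacher signs. -/
lemma quad_moment {ι κ : Type*} [Fintype ι] [DecidableEq ι] [Fintype κ] (a : κ → ι → ℝ) {n : ℕ} (hn : 1 ≤ n) :
    ∑ σ : ι → Bool, (∑ k, (∑ i, a k i * (if σ i then (1:ℝ) else -1)) ^ 2) ^ n
      ≤ 2 ^ (Fintype.card ι) * df n * (∑ k, ∑ i, (a k i) ^ 2) ^ n := by
  classical
  set S : ℝ := ∑ k, ∑ i, (a k i) ^ 2 with hS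
  have hSnn : 0 ≤ S := Finset.sum_nonneg fun k _ => Finset.sum_nonneg fun i _ => sq_nonneg _
  set c : (ι → Bool) → κ → ℝ := fun σ k => (∑ i, a k i * (if σ i then (1:ℝ) else -1)) ^ 2 with hc
  have hcnn : ∀ σ k, 0 ≤ c σ k := fun σ k => sq_nonneg _
  rcases eq_or_lt_of_le hSnn with hS0 | hSpos
  · -- S = 0 : all a k i = 0
    have hak : ∀ k i, a k i = 0 := by
      intro k i
      have h1 : ∀ k ∈ (univ : Finset κ), (0:ℝ) ≤ ∑ i, (a k i) ^ 2 :=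
        fun k _ => Finset.sum_nonneg fun i _ => sq_nonneg _
      have h2 : ∑ i, (a k i) ^ 2 = 0 :=
        (Finset.sum_eq_zero_iff_of_nonneg h1).mp hS0.symm k (mem_univ k)
      have h3 : ∀ i ∈ (univ : Finset ι), (0:ℝ) ≤ (a k i) ^ 2 := fun i _ => sq_nonneg _
      have := (Finset.sum_eq_zero_iff_of_nonneg h3).mp h2 i (mem_univ i)
      exact pow_eq_zero_iff (by norm_num) |>.mp this
    have : ∀ σ : ι → Bool, (∑ k, c σ k) ^ n = 0 := by
      intro σ
      have : ∀ k, c σ k = 0 := by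
        intro k; simp [hc, hak]
      rw [Finset.sum_eq_zero fun k _ => this k]
      exact zero_pow (by omega)
    simp only [hc] at this
    rw [Finset.sum_congr rfl fun σ _ => this σ]
    simp
    positivity
  · -- main case S > 0
    set w : κ → ℝ := fun k => (∑ i, (a k i) ^ 2) / S with hw
    have hwnn : ∀ k, 0 ≤ w k := fun k => by
      apply div_nonneg (Finset.sum_nonneg fun i _ => sq_nonneg _) hSnn
    have hwsum : ∑ k, w k = 1 := by
      rw [hw]
      rw [← Finset.sum_div]
      exact div_self hSpos.ne'
    set z : (ι → Bool) → κ → ℝ := fun σ k =>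
      if (∑ i, (a k i) ^ 2) = 0 then 0 else c σ k * S / (∑ i, (a k i) ^ 2) with hz
    have hznn : ∀ σ k, 0 ≤ z σ k := by
      intro σ k
      simp only [hz]
      split_ifs with h
      · exact le_refl 0
      · have hpos : 0 < ∑ i, (a k i) ^ 2 :=
          lt_of_le_of_ne (Finset.sum_nonneg fun i _ => sq_nonneg _) (Ne.symm h)
        exact div_nonneg (mul_nonneg (hcnn σ k) hSnn) hpos.le
    have hdecomp : ∀ σ k, w k * z σ k = c σ k := by
      intro σ k
      simp only [hw, hz]
      split_ifs with h
      · -- a k = 0 row: c σ k = 0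
        have h3 : ∀ i ∈ (univ : Finset ι), (0:ℝ) ≤ (a k i) ^ 2 := fun i _ => sq_nonneg _
        have hak : ∀ i, a k i = 0 := fun i =>
          pow_eq_zero_iff (two_ne_zero) |>.mp ((Finset.sum_eq_zero_iff_of_nonneg h3).mp h i (mem_univ i))
        simp [hc, hak]
      · field_simp
    have key : ∀ σ, (∑ k, c σ k) ^ n ≤ ∑ k, w k * (z σ k) ^ n := by
      intro σ
      have := Real.pow_arith_mean_le_arith_mean_pow univ w (z σ)
        (fun k _ => hwnn k) hwsum (fun k _ => hznn σ k) n
      calc (∑ k, c σ k) ^ n = (∑ k, w k * z σ k) ^ n := by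
            rw [Finset.sum_congr rfl fun k _ => (hdecomp σ k).symm]
        _ ≤ ∑ k, w k * (z σ k) ^ n := this
    calc ∑ σ : ι → Bool, (∑ k, c σ k) ^ n
        ≤ ∑ σ : ι → Bool, ∑ k, w k * (z σ k) ^ n := Finset.sum_le_sum fun σ _ => key σ
      _ = ∑ k, w k * ∑ σ : ι → Bool, (z σ k) ^ n := by
          rw [Finset.sum_comm]
          exact Finset.sum_congr rfl fun k _ => by rw [Finset.mul_sum]
      _ ≤ ∑ k, w k * (2 ^ (Fintype.card ι) * df n * S ^ n) := by
          apply Finset.sum_le_sum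
          intro k _
          apply mul_le_mul_of_nonneg_left _ (hwnn k)
          by_cases h : (∑ i, (a k i) ^ 2) = 0
          · simp only [hz, if_pos h, zero_pow (show n ≠ 0 by omega), Finset.sum_const, smul_zero]
            positivity
          · have hpos : 0 < ∑ i, (a k i) ^ 2 :=
              lt_of_le_of_ne (Finset.sum_nonneg fun i _ => sq_nonneg _) (Ne.symm h)
            simp only [hz, if_neg h]
            have hzeq : ∀ σ, (c σ k * S / (∑ i, (a k i) ^ 2)) ^ n
                = (c σ k) ^ n * (S / (∑ i, (a k i) ^ 2)) ^ n := by
              intro σ; rw [div_pow, mul_pow, mul_div_assoc, ← div_pow]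
            rw [Finset.sum_congr rfl fun σ _ => hzeq σ, ← Finset.sum_mul]
            have hck : ∑ σ : ι → Bool, (c σ k) ^ n
                ≤ 2 ^ (Fintype.card ι) * df n * (∑ i, (a k i) ^ 2) ^ n := by
              have hcs : ∀ σ : ι → Bool, (c σ k) ^ n
                  = (∑ i, a k i * (if σ i then (1:ℝ) else -1)) ^ (2 * n) := by
                intro σ
                exact (pow_mul _ 2 n).symm
              rw [Finset.sum_congr rfl fun σ _ => hcs σ]
              exact khintchine n (fun i => a k i)
            have hXn : ((∑ i, (a k i) ^ 2) : ℝ) ^ n ≠ 0 := by positivity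
            calc (∑ σ : ι → Bool, (c σ k) ^ n) * (S / (∑ i, (a k i) ^ 2)) ^ n
                ≤ (2 ^ (Fintype.card ι) * df n * (∑ i, (a k i) ^ 2) ^ n)
                    * (S / (∑ i, (a k i) ^ 2)) ^ n := by
                  apply mul_le_mul_of_nonneg_right hck
                  positivity
              _ = 2 ^ (Fintype.card ι) * df n * S ^ n := by
                  rw [div_pow]
                  field_simp
      _ = 2 ^ (Fintype.card ι) * df n * S ^ n := by
          rw [← Finset.sum_mul, hwsum, one_mul]


lemma dot_fact {N : ℕ} (B : Matrix (Fin N) (Fin N) ℝ) (x y : Fin N → ℝ) :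
    x ⬝ᵥ (Bᴴ * B) *ᵥ y = (B *ᵥ x) ⬝ᵥ (B *ᵥ y) := by
  rw [← Matrix.mulVec_mulVec, dotProduct_mulVec x Bᴴ _, Matrix.vecMul_conjTranspose]
  simp

lemma psd_dot_nonneg {N : ℕ} {A : Matrix (Fin N) (Fin N) ℝ} (hA : A.PosSemidef)
    (x : Fin N → ℝ) : 0 ≤ x ⬝ᵥ A *ᵥ x := by
  simpa using hA.dotProduct_mulVec_nonneg x

lemma psd_dot_CS {N : ℕ} {A : Matrix (Fin N) (Fin N) ℝ} (hA : A.PosSemidef)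
    (x y : Fin N → ℝ) :
    x ⬝ᵥ A *ᵥ y ≤ Real.sqrt (x ⬝ᵥ A *ᵥ x) * Real.sqrt (y ⬝ᵥ A *ᵥ y) := by
  obtain ⟨B, rfl⟩ := Matrix.posSemidef_iff_eq_transpose_mul_self.mp hA
  rw [dot_fact, dot_fact, dot_fact]
  have h1 : (B *ᵥ x) ⬝ᵥ (B *ᵥ x) = ∑ i, ((B *ᵥ x) i) ^ 2 := by
    simp [dotProduct, sq]
  have h2 : (B *ᵥ y) ⬝ᵥ (B *ᵥ y) = ∑ i, ((B *ᵥ y) i) ^ 2 := by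
    simp [dotProduct, sq]
  rw [h1, h2]
  exact Real.sum_mul_le_sqrt_mul_sqrt univ (B *ᵥ x) (B *ᵥ y)

lemma trace_fact {N : ℕ} (B : Matrix (Fin N) (Fin N) ℝ) :
    (Bᴴ * B).trace = ∑ k, ∑ i, (B k i) ^ 2 := by
  simp only [Matrix.trace, Matrix.diag, Matrix.mul_apply, Matrix.conjTranspose_apply, star_trivial,
    sq]
  rw [Finset.sum_comm]

lemma dot_mulVec_eq {N : ℕ} (A : Matrix (Fin N) (Fin N) ℝ) (x y : Fin N → ℝ) :
    x ⬝ᵥ A *ᵥ y = ∑ i, ∑ j, x i * A i j * y j := by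
  simp [dotProduct, Matrix.mulVec, Finset.mul_sum, mul_assoc]

lemma mix_dot {T N M : ℕ} (K : Fin T → Fin M → Matrix (Fin N) (Fin N) ℝ)
    (θ : Fin M → ℝ) (t : Fin T) (x y : Fin N → ℝ) :
    x ⬝ᵥ (mixKernel K θ t) *ᵥ y = ∑ m, θ m * (x ⬝ᵥ (K t m) *ᵥ y) := by
  calc x ⬝ᵥ (mixKernel K θ t) *ᵥ y
      = ∑ i, ∑ j, x i * (∑ m, θ m * K t m i j) * y j := by
        rw [dot_mulVec_eq]
        apply Finset.sum_congr rfl; intro i _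
        apply Finset.sum_congr rfl; intro j _
        simp [mixKernel, Matrix.sum_apply]
    _ = ∑ i, ∑ m, ∑ j, θ m * (x i * K t m i j * y j) := by
        apply Finset.sum_congr rfl; intro i _
        rw [Finset.sum_comm]
        apply Finset.sum_congr rfl; intro j _
        rw [Finset.mul_sum, Finset.sum_mul]
        apply Finset.sum_congr rfl; intro m _
        ring
    _ = ∑ m, ∑ i, ∑ j, θ m * (x i * K t m i j * y j) := Finset.sum_comm
    _ = ∑ m, θ m * (x ⬝ᵥ (K t m) *ᵥ y) := by
        apply Finset.sum_congr rfl; intro m _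
        rw [dot_mulVec_eq, Finset.mul_sum]
        apply Finset.sum_congr rfl; intro i _
        rw [Finset.mul_sum]

lemma mix_psd {T N M : ℕ} {K : Fin T → Fin M → Matrix (Fin N) (Fin N) ℝ}
    (hK : ∀ t m, (K t m).PosSemidef) {θ : Fin M → ℝ} (hθ : ∀ m, 0 ≤ θ m) (t : Fin T) :
    (mixKernel K θ t).PosSemidef := by
  refine Matrix.PosSemidef.of_dotProduct_mulVec_nonneg ?_ ?_
  · unfold Matrix.IsHermitian
    rw [mixKernel, Matrix.conjTranspose_sum]
    apply Finset.sum_congr rfl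
    intro m _
    rw [Matrix.conjTranspose_smul]
    rw [(hK t m).isHermitian]
    simp
  · intro x
    have : star x ⬝ᵥ (mixKernel K θ t) *ᵥ x = ∑ m, θ m * (star x ⬝ᵥ (K t m) *ᵥ x) :=
      mix_dot K θ t (star x) x
    rw [this]
    apply Finset.sum_nonneg
    intro m _
    exact mul_nonneg (hθ m) ((hK t m).dotProduct_mulVec_nonneg x)


/-- `u σ m` : the per-kernel aggregated quadratic form. -/
noncomputable def uu {T N M : ℕ} (K : Fin T → Fin M → Matrix (Fin N) (Fin N) ℝ)
    (lam : Fin T → ℝ) (σ : Fin T → Fin N → Bool) (m : Fin M) : ℝ :=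
  ∑ t, (1 / lam t) * (sgnVec (σ t) ⬝ᵥ (K t m) *ᵥ (sgnVec (σ t)))

lemma uu_nonneg {T N M : ℕ} {K : Fin T → Fin M → Matrix (Fin N) (Fin N) ℝ}
    (hK : ∀ t m, (K t m).PosSemidef) {lam : Fin T → ℝ} (hlam : ∀ t, 0 < lam t)
    (σ : Fin T → Fin N → Bool) (m : Fin M) : 0 ≤ uu K lam σ m :=
  Finset.sum_nonneg fun t _ => mul_nonneg (one_div_nonneg.mpr (hlam t).le)
    (psd_dot_nonneg (hK t m) _)

lemma sup_bound {T N M : ℕ} {K : Fin T → Fin M → Matrix (Fin N) (Fin N) ℝ}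
    (hK : ∀ t m, (K t m).PosSemidef) {R : ℝ} (hR : 0 < R)
    {lam : Fin T → ℝ} (hlam : ∀ t, 0 < lam t) {p q : ℝ}
    (hpq : p.HolderConjugate q) (σ : Fin T → Fin N → Bool) (v : ℝ)
    (hv : v ∈ {v : ℝ | ∃ θ : Fin M → ℝ, (∀ m, 0 ≤ θ m) ∧ (∑ m, θ m ^ p) ^ (1 / p) ≤ 1 ∧
        ∃ α : Fin T → Fin N → ℝ,
          (∑ t, α t ⬝ᵥ (mixKernel K θ t).mulVec (α t)) ≤ R ∧
          v = ∑ t, (1 / Real.sqrt (lam t)) *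
            (sgnVec (σ t) ⬝ᵥ (mixKernel K θ t).mulVec (α t))}) :
    v ≤ Real.sqrt (R * (∑ m, (uu K lam σ m) ^ q) ^ (1 / q)) := by
  obtain ⟨θ, hθ0, hθp, α, hα, rfl⟩ := hv
  have hA : ∀ t, (mixKernel K θ t).PosSemidef := mix_psd hK hθ0
  have hAsgn : ∀ t, 0 ≤ sgnVec (σ t) ⬝ᵥ (mixKernel K θ t) *ᵥ (sgnVec (σ t)) :=
    fun t => psd_dot_nonneg (hA t) _
  have hAα : ∀ t, 0 ≤ α t ⬝ᵥ (mixKernel K θ t) *ᵥ (α t) :=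
    fun t => psd_dot_nonneg (hA t) _
  set G : ℝ := (∑ m, (uu K lam σ m) ^ q) ^ (1 / q) with hG
  have hGnn : 0 ≤ G := by
    rw [hG]
    apply Real.rpow_nonneg
    exact Finset.sum_nonneg fun m _ =>
      Real.rpow_nonneg (uu_nonneg hK hlam σ m) q
  have step1 : (∑ t, (1 / Real.sqrt (lam t)) *
        (sgnVec (σ t) ⬝ᵥ (mixKernel K θ t).mulVec (α t)))
      ≤ ∑ t, Real.sqrt ((sgnVec (σ t) ⬝ᵥ (mixKernel K θ t) *ᵥ (sgnVec (σ t))) / lam t)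
          * Real.sqrt (α t ⬝ᵥ (mixKernel K θ t) *ᵥ (α t)) := by
    apply Finset.sum_le_sum
    intro t _
    have hsl : 0 < Real.sqrt (lam t) := Real.sqrt_pos.mpr (hlam t)
    calc (1 / Real.sqrt (lam t)) * (sgnVec (σ t) ⬝ᵥ (mixKernel K θ t).mulVec (α t))
        ≤ (1 / Real.sqrt (lam t)) *
            (Real.sqrt (sgnVec (σ t) ⬝ᵥ (mixKernel K θ t) *ᵥ (sgnVec (σ t)))
              * Real.sqrt (α t ⬝ᵥ (mixKernel K θ t) *ᵥ (α t))) := by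
          apply mul_le_mul_of_nonneg_left (psd_dot_CS (hA t) _ _) (by positivity)
      _ = Real.sqrt ((sgnVec (σ t) ⬝ᵥ (mixKernel K θ t) *ᵥ (sgnVec (σ t))) / lam t)
          * Real.sqrt (α t ⬝ᵥ (mixKernel K θ t) *ᵥ (α t)) := by
          rw [Real.sqrt_div (hAsgn t) (lam t)]
          ring
  have step2 : ∑ t, Real.sqrt ((sgnVec (σ t) ⬝ᵥ (mixKernel K θ t) *ᵥ (sgnVec (σ t))) / lam t)
          * Real.sqrt (α t ⬝ᵥ (mixKernel K θ t) *ᵥ (α t))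
      ≤ Real.sqrt (∑ t, (sgnVec (σ t) ⬝ᵥ (mixKernel K θ t) *ᵥ (sgnVec (σ t))) / lam t)
        * Real.sqrt (∑ t, α t ⬝ᵥ (mixKernel K θ t) *ᵥ (α t)) :=
    Real.sum_sqrt_mul_sqrt_le univ
      (fun t => div_nonneg (hAsgn t) (hlam t).le) (fun t => hAα t)
  have step3 : ∑ t, (sgnVec (σ t) ⬝ᵥ (mixKernel K θ t) *ᵥ (sgnVec (σ t))) / lam t
      = ∑ m, θ m * uu K lam σ m := by
    calc ∑ t, (sgnVec (σ t) ⬝ᵥ (mixKernel K θ t) *ᵥ (sgnVec (σ t))) / lam t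
        = ∑ t, ∑ m, (1 / lam t) * (θ m * (sgnVec (σ t) ⬝ᵥ (K t m) *ᵥ (sgnVec (σ t)))) := by
          apply Finset.sum_congr rfl; intro t _
          rw [mix_dot, div_eq_mul_one_div, mul_comm, Finset.mul_sum]
      _ = ∑ m, ∑ t, (1 / lam t) * (θ m * (sgnVec (σ t) ⬝ᵥ (K t m) *ᵥ (sgnVec (σ t)))) :=
          Finset.sum_comm
      _ = ∑ m, θ m * uu K lam σ m := by
          apply Finset.sum_congr rfl; intro m _
          rw [uu, Finset.mul_sum]
          apply Finset.sum_congr rfl; intro t _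
          ring
  have step4 : ∑ m, θ m * uu K lam σ m ≤ G := by
    calc ∑ m, θ m * uu K lam σ m
        ≤ (∑ m, θ m ^ p) ^ (1 / p) * (∑ m, (uu K lam σ m) ^ q) ^ (1 / q) :=
          Real.inner_le_Lp_mul_Lq_of_nonneg univ hpq (fun m _ => hθ0 m)
            (fun m _ => uu_nonneg hK hlam σ m)
      _ ≤ 1 * G := by
          apply mul_le_mul_of_nonneg_right hθp
          exact Real.rpow_nonneg (Finset.sum_nonneg fun m _ =>
            Real.rpow_nonneg (uu_nonneg hK hlam σ m) q) _
      _ = G := one_mul G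
  calc (∑ t, (1 / Real.sqrt (lam t)) *
        (sgnVec (σ t) ⬝ᵥ (mixKernel K θ t).mulVec (α t)))
      ≤ Real.sqrt (∑ t, (sgnVec (σ t) ⬝ᵥ (mixKernel K θ t) *ᵥ (sgnVec (σ t))) / lam t)
        * Real.sqrt (∑ t, α t ⬝ᵥ (mixKernel K θ t) *ᵥ (α t)) := le_trans step1 step2
    _ ≤ Real.sqrt G * Real.sqrt R := by
        apply mul_le_mul
        · apply Real.sqrt_le_sqrt
          rw [step3]; exact step4
        · exact Real.sqrt_le_sqrt hα
        · exact Real.sqrt_nonneg _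
        · exact Real.sqrt_nonneg _
    _ = Real.sqrt (R * G) := by
        rw [← Real.sqrt_mul hGnn, mul_comm]


lemma u_moment {T N M : ℕ} {K : Fin T → Fin M → Matrix (Fin N) (Fin N) ℝ}
    (hK : ∀ t m, (K t m).PosSemidef) {lam : Fin T → ℝ} (hlam : ∀ t, 0 < lam t)
    (m : Fin M) {n : ℕ} (hn : 1 ≤ n) :
    ∑ σ : Fin T → Fin N → Bool, (uu K lam σ m) ^ n
      ≤ 2 ^ (T * N) * df n * (∑ t, (1 / lam t) * (K t m).trace) ^ n := by
  classical
  choose B hB using fun t => Matrix.posSemidef_iff_eq_transpose_mul_self.mp (hK t m)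
  set a : (Fin T × Fin N) → (Fin T × Fin N) → ℝ :=
    fun kk ii => if kk.1 = ii.1 then Real.sqrt (1 / lam kk.1) * B kk.1 kk.2 ii.2 else 0 with ha
  -- inner sum identification
  have hinner : ∀ (σ' : Fin T × Fin N → Bool) (t : Fin T) (k : Fin N),
      (∑ ii : Fin T × Fin N, a (t, k) ii * (if σ' ii then (1:ℝ) else -1))
        = Real.sqrt (1 / lam t) * ((B t) *ᵥ (sgnVec (fun i => σ' (t, i)))) k := by
    intro σ' t k
    rw [Fintype.sum_prod_type]
    rw [Finset.sum_eq_single_of_mem t (mem_univ t)]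
    · rw [Matrix.mulVec, dotProduct, Finset.mul_sum]
      apply Finset.sum_congr rfl
      intro i _
      simp only [ha, if_pos rfl, sgnVec]
      ring
    · intro t' _ hne
      apply Finset.sum_eq_zero
      intro i _
      simp only [ha, if_neg (fun h : t = t' => hne h.symm)]
      ring
  have hid : ∀ σ' : Fin T × Fin N → Bool,
      ∑ kk : Fin T × Fin N, (∑ ii : Fin T × Fin N, a kk ii * (if σ' ii then (1:ℝ) else -1)) ^ 2
        = uu K lam (fun t i => σ' (t, i)) m := by
    intro σ'
    rw [Fintype.sum_prod_type]
    rw [uu]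
    apply Finset.sum_congr rfl
    intro t _
    rw [hB t, dot_fact]
    have hdp : ((B t) *ᵥ (sgnVec (fun i => σ' (t, i)))) ⬝ᵥ ((B t) *ᵥ (sgnVec (fun i => σ' (t, i))))
        = ∑ k, (((B t) *ᵥ (sgnVec (fun i => σ' (t, i)))) k) ^ 2 := by
      simp [dotProduct, sq]
    rw [hdp, Finset.mul_sum]
    apply Finset.sum_congr rfl
    intro k _
    rw [hinner σ' t k, mul_pow, Real.sq_sqrt (one_div_nonneg.mpr (hlam t).le)]
  have htr : ∑ kk : Fin T × Fin N, ∑ ii : Fin T × Fin N, (a kk ii) ^ 2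
      = ∑ t, (1 / lam t) * (K t m).trace := by
    rw [Fintype.sum_prod_type]
    apply Finset.sum_congr rfl
    intro t _
    have : ∀ k : Fin N, ∑ ii : Fin T × Fin N, (a (t, k) ii) ^ 2
        = (1 / lam t) * ∑ i, (B t k i) ^ 2 := by
      intro k
      rw [Fintype.sum_prod_type]
      rw [Finset.sum_eq_single_of_mem t (mem_univ t)]
      · rw [Finset.mul_sum]
        apply Finset.sum_congr rfl
        intro i _
        simp only [ha, if_pos rfl]
        rw [mul_pow, Real.sq_sqrt (one_div_nonneg.mpr (hlam t).le)]
      · intro t' _ hne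
        apply Finset.sum_eq_zero
        intro i _
        simp only [ha, if_neg (fun h : t = t' => hne h.symm)]
        ring
    rw [Finset.sum_congr rfl fun k _ => this k, ← Finset.mul_sum, hB t, trace_fact]
  -- transport the σ-sum
  have hE : ∑ σ : Fin T → Fin N → Bool, (uu K lam σ m) ^ n
      = ∑ σ' : Fin T × Fin N → Bool,
          (∑ kk : Fin T × Fin N,
            (∑ ii : Fin T × Fin N, a kk ii * (if σ' ii then (1:ℝ) else -1)) ^ 2) ^ n := by
    rw [← Equiv.sum_comp (Equiv.curry (Fin T) (Fin N) Bool)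
      (fun σ => (uu K lam σ m) ^ n)]
    apply Finset.sum_congr rfl
    intro σ' _
    rw [hid σ']
    rfl
  rw [hE, htr.symm]
  have hcard : Fintype.card (Fin T × Fin N) = T * N := by simp
  calc ∑ σ' : Fin T × Fin N → Bool,
        (∑ kk : Fin T × Fin N,
          (∑ ii : Fin T × Fin N, a kk ii * (if σ' ii then (1:ℝ) else -1)) ^ 2) ^ n
      ≤ 2 ^ (Fintype.card (Fin T × Fin N)) * df n
          * (∑ kk : Fin T × Fin N, ∑ ii : Fin T × Fin N, (a kk ii) ^ 2) ^ n :=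
        quad_moment a hn
    _ = 2 ^ (T * N) * df n * (∑ kk : Fin T × Fin N, ∑ ii : Fin T × Fin N, (a kk ii) ^ 2) ^ n := by
        rw [hcard]


lemma psd_trace_nonneg {N : ℕ} {A : Matrix (Fin N) (Fin N) ℝ} (hA : A.PosSemidef) :
    0 ≤ A.trace := by
  obtain ⟨B, rfl⟩ := Matrix.posSemidef_iff_eq_transpose_mul_self.mp hA
  rw [trace_fact]
  exact Finset.sum_nonneg fun k _ => Finset.sum_nonneg fun i _ => sq_nonneg _

/-- Generalized Minkowski inequality for finite sums. -/
lemma Lp_sum_le {ι κ : Type*} [Fintype ι] (s : Finset κ) (f : κ → ι → ℝ)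
    (hf : ∀ k i, 0 ≤ f k i) {q : ℝ} (hq : 1 ≤ q) :
    (∑ i, (∑ k ∈ s, f k i) ^ q) ^ (1 / q) ≤ ∑ k ∈ s, (∑ i, (f k i) ^ q) ^ (1 / q) := by
  classical
  induction s using Finset.cons_induction with
  | empty =>
    have hq0 : q ≠ 0 := by intro h; rw [h] at hq; linarith
    simp only [Finset.sum_empty, Real.zero_rpow hq0, Finset.sum_const, smul_zero]
    rw [Real.zero_rpow (by simp [hq0])]
  | cons a s ha ih =>
    simp only [Finset.sum_cons]
    calc (∑ i, (f a i + ∑ k ∈ s, f k i) ^ q) ^ (1 / q)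
        ≤ (∑ i, (f a i) ^ q) ^ (1 / q) + (∑ i, (∑ k ∈ s, f k i) ^ q) ^ (1 / q) :=
          Real.Lp_add_le_of_nonneg (s := Finset.univ) (f := fun i => f a i)
            (g := fun i => ∑ k ∈ s, f k i) hq (fun i _ => hf a i)
            (fun i _ => Finset.sum_nonneg fun k _ => hf k i)
    _ ≤ (∑ i, (f a i) ^ q) ^ (1 / q) + ∑ k ∈ s, (∑ i, (f k i) ^ q) ^ (1 / q) := by
          apply add_le_add_right ih

lemma card_sign (T N : ℕ) : (Fintype.card (Fin T → Fin N → Bool)) = 2 ^ (T * N) := by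
  simp [Fintype.card_fun, ← pow_mul, mul_comm]



/-- average of `uu^q` is at most `(2 q ‖trace vector‖)^q`. -/
lemma u_rpow_avg {T N M : ℕ} {K : Fin T → Fin M → Matrix (Fin N) (Fin N) ℝ}
    (hK : ∀ t m, (K t m).PosSemidef) {lam : Fin T → ℝ} (hlam : ∀ t, 0 < lam t)
    {q : ℝ} (hq1 : 1 < q) (m : Fin M) :
    ∑ σ : Fin T → Fin N → Bool, (1 / (2:ℝ) ^ (T * N)) * (uu K lam σ m) ^ q
      ≤ (2 * q * (∑ t, (1 / lam t) * (K t m).trace)) ^ q := by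
  classical
  set C : ℝ := (2:ℝ) ^ (T * N) with hC
  have hCpos : 0 < C := by positivity
  set tr : ℝ := ∑ t, (1 / lam t) * (K t m).trace with htrdef
  have htr0 : 0 ≤ tr :=
    Finset.sum_nonneg fun t _ => mul_nonneg (one_div_nonneg.mpr (hlam t).le)
      (psd_trace_nonneg (hK t m))
  set n : ℕ := ⌈q⌉₊ with hn
  have hq0 : 0 < q := by linarith
  have hnq : q ≤ (n:ℝ) := Nat.le_ceil q
  have hn1 : 1 ≤ n := Nat.one_le_ceil_iff.mpr hq0
  have hnpos : (0:ℝ) < n := lt_of_lt_of_le hq0 hnq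
  have hn2q : (n:ℝ) ≤ 2 * q := by
    have := Nat.ceil_lt_add_one hq0.le
    have h2 : (⌈q⌉₊ : ℝ) < q + 1 := this
    linarith
  have hw' : ∑ _σ : Fin T → Fin N → Bool, (1 / C) = 1 := by
    rw [Finset.sum_const, Finset.card_univ, card_sign T N, nsmul_eq_mul]
    push_cast
    rw [hC]
    field_simp
  have hP : 1 ≤ (n:ℝ) / q := (one_le_div hq0).mpr hnq
  have step1 : ∑ σ : Fin T → Fin N → Bool, (1 / C) * (uu K lam σ m) ^ q
      ≤ (∑ σ : Fin T → Fin N → Bool, (1 / C) * ((uu K lam σ m) ^ q) ^ ((n:ℝ) / q))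
          ^ (1 / ((n:ℝ) / q)) :=
    Real.arith_mean_le_rpow_mean univ _ _ (fun σ _ => by positivity) hw'
      (fun σ _ => Real.rpow_nonneg (uu_nonneg hK hlam σ m) q) hP
  have hexp : ∀ σ : Fin T → Fin N → Bool,
      ((uu K lam σ m) ^ q) ^ ((n:ℝ) / q) = (uu K lam σ m) ^ n := by
    intro σ
    rw [← Real.rpow_natCast (uu K lam σ m) n, ← Real.rpow_mul (uu_nonneg hK hlam σ m)]
    congr 1
    field_simp
  have step2 : ∑ σ : Fin T → Fin N → Bool, (1 / C) * ((uu K lam σ m) ^ q) ^ ((n:ℝ) / q)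
      ≤ ((n:ℝ) * tr) ^ n := by
    calc ∑ σ : Fin T → Fin N → Bool, (1 / C) * ((uu K lam σ m) ^ q) ^ ((n:ℝ) / q)
        = (1 / C) * ∑ σ : Fin T → Fin N → Bool, (uu K lam σ m) ^ n := by
          rw [Finset.mul_sum]
          exact Finset.sum_congr rfl fun σ _ => by rw [hexp σ]
      _ ≤ (1 / C) * (C * df n * tr ^ n) := by
          apply mul_le_mul_of_nonneg_left _ (by positivity)
          exact u_moment hK hlam m hn1
      _ = (df n : ℝ) * tr ^ n := by
          field_simp
      _ ≤ (n:ℝ) ^ n * tr ^ n := by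
          apply mul_le_mul_of_nonneg_right (df_le_pow n) (by positivity)
      _ = ((n:ℝ) * tr) ^ n := (mul_pow _ _ _).symm
  have hsum_nonneg : 0 ≤ ∑ σ : Fin T → Fin N → Bool, (1 / C) * ((uu K lam σ m) ^ q) ^ ((n:ℝ) / q) :=
    Finset.sum_nonneg fun σ _ => mul_nonneg (by positivity)
      (Real.rpow_nonneg (Real.rpow_nonneg (uu_nonneg hK hlam σ m) q) _)
  calc ∑ σ : Fin T → Fin N → Bool, (1 / C) * (uu K lam σ m) ^ q
      ≤ (∑ σ : Fin T → Fin N → Bool, (1 / C) * ((uu K lam σ m) ^ q) ^ ((n:ℝ) / q))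
          ^ (1 / ((n:ℝ) / q)) := step1
    _ ≤ (((n:ℝ) * tr) ^ n) ^ (1 / ((n:ℝ) / q)) := by
        apply Real.rpow_le_rpow hsum_nonneg step2 (by positivity)
    _ = ((n:ℝ) * tr) ^ q := by
        rw [one_div_div, ← Real.rpow_natCast ((n:ℝ) * tr) n,
          ← Real.rpow_mul (by positivity)]
        congr 1
        field_simp
    _ ≤ (2 * q * tr) ^ q := by
        apply Real.rpow_le_rpow (by positivity) _ hq0.le
        exact mul_le_mul_of_nonneg_right hn2q htr0


/-- average of `G σ` bound. -/
lemma G_avg {T N M : ℕ} {K : Fin T → Fin M → Matrix (Fin N) (Fin N) ℝ}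
    (hK : ∀ t m, (K t m).PosSemidef) {lam : Fin T → ℝ} (hlam : ∀ t, 0 < lam t)
    {q : ℝ} (hq1 : 1 < q) :
    ∑ σ : Fin T → Fin N → Bool, (1 / (2:ℝ) ^ (T * N)) * (∑ m, (uu K lam σ m) ^ q) ^ (1 / q)
      ≤ 2 * q * (∑ t, (1 / lam t) * (∑ m, (K t m).trace ^ q) ^ (1 / q)) := by
  classical
  set C : ℝ := (2:ℝ) ^ (T * N) with hC
  have hCpos : 0 < C := by positivity
  have hq0 : (0:ℝ) < q := by linarith
  have hw' : ∑ _σ : Fin T → Fin N → Bool, (1 / C) = 1 := by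
    rw [Finset.sum_const, Finset.card_univ, card_sign T N, nsmul_eq_mul]
    push_cast
    rw [hC]
    field_simp
  have hGnn : ∀ σ, (0:ℝ) ≤ (∑ m, (uu K lam σ m) ^ q) ^ (1 / q) := fun σ =>
    Real.rpow_nonneg (Finset.sum_nonneg fun m _ =>
      Real.rpow_nonneg (uu_nonneg hK hlam σ m) q) _
  have htr0 : ∀ m : Fin M, (0:ℝ) ≤ ∑ t, (1 / lam t) * (K t m).trace := fun m =>
    Finset.sum_nonneg fun t _ => mul_nonneg (one_div_nonneg.mpr (hlam t).le)
      (psd_trace_nonneg (hK t m))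
  have step1 : ∑ σ : Fin T → Fin N → Bool, (1 / C) * (∑ m, (uu K lam σ m) ^ q) ^ (1 / q)
      ≤ (∑ σ : Fin T → Fin N → Bool,
          (1 / C) * ((∑ m, (uu K lam σ m) ^ q) ^ (1 / q)) ^ q) ^ (1 / q) :=
    Real.arith_mean_le_rpow_mean univ _ _ (fun σ _ => by positivity) hw'
      (fun σ _ => hGnn σ) hq1.le
  have hGq : ∀ σ : Fin T → Fin N → Bool,
      ((∑ m, (uu K lam σ m) ^ q) ^ (1 / q)) ^ q = ∑ m, (uu K lam σ m) ^ q := by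
    intro σ
    rw [← Real.rpow_mul (Finset.sum_nonneg fun m _ =>
      Real.rpow_nonneg (uu_nonneg hK hlam σ m) q)]
    rw [one_div_mul_cancel hq0.ne', Real.rpow_one]
  have step2 : ∑ σ : Fin T → Fin N → Bool,
        (1 / C) * ((∑ m, (uu K lam σ m) ^ q) ^ (1 / q)) ^ q
      ≤ ∑ m, (2 * q * (∑ t, (1 / lam t) * (K t m).trace)) ^ q := by
    calc ∑ σ : Fin T → Fin N → Bool, (1 / C) * ((∑ m, (uu K lam σ m) ^ q) ^ (1 / q)) ^ q
        = ∑ σ : Fin T → Fin N → Bool, ∑ m, (1 / C) * (uu K lam σ m) ^ q := by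
          apply Finset.sum_congr rfl
          intro σ _
          rw [hGq σ, Finset.mul_sum]
      _ = ∑ m, ∑ σ : Fin T → Fin N → Bool, (1 / C) * (uu K lam σ m) ^ q := Finset.sum_comm
      _ ≤ ∑ m, (2 * q * (∑ t, (1 / lam t) * (K t m).trace)) ^ q :=
          Finset.sum_le_sum fun m _ => u_rpow_avg hK hlam hq1 m
  have step3 : (∑ m, (2 * q * (∑ t, (1 / lam t) * (K t m).trace)) ^ q) ^ (1 / q)
      ≤ 2 * q * (∑ t, (1 / lam t) * (∑ m, (K t m).trace ^ q) ^ (1 / q)) := by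
    have hfact : ∀ m : Fin M, (2 * q * (∑ t, (1 / lam t) * (K t m).trace)) ^ q
        = (2 * q) ^ q * ((∑ t, (1 / lam t) * (K t m).trace)) ^ q := by
      intro m
      rw [Real.mul_rpow (by positivity) (htr0 m)]
    calc (∑ m, (2 * q * (∑ t, (1 / lam t) * (K t m).trace)) ^ q) ^ (1 / q)
        = ((2 * q) ^ q * ∑ m, ((∑ t, (1 / lam t) * (K t m).trace)) ^ q) ^ (1 / q) := by
          rw [Finset.sum_congr rfl fun m _ => hfact m, ← Finset.mul_sum]
      _ = 2 * q * (∑ m, ((∑ t, (1 / lam t) * (K t m).trace)) ^ q) ^ (1 / q) := by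
          rw [Real.mul_rpow (by positivity)
            (Finset.sum_nonneg fun m _ => Real.rpow_nonneg (htr0 m) q)]
          congr 1
          rw [← Real.rpow_mul (by positivity), mul_one_div, div_self hq0.ne', Real.rpow_one]
      _ ≤ 2 * q * (∑ t, (1 / lam t) * (∑ m, (K t m).trace ^ q) ^ (1 / q)) := by
          apply mul_le_mul_of_nonneg_left _ (by positivity)
          calc (∑ m, ((∑ t, (1 / lam t) * (K t m).trace)) ^ q) ^ (1 / q)
              ≤ ∑ t, (∑ m, ((1 / lam t) * (K t m).trace) ^ q) ^ (1 / q) :=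
                Lp_sum_le univ (fun t m => (1 / lam t) * (K t m).trace)
                  (fun t m => mul_nonneg (one_div_nonneg.mpr (hlam t).le)
                    (psd_trace_nonneg (hK t m))) hq1.le
            _ = ∑ t, (1 / lam t) * (∑ m, (K t m).trace ^ q) ^ (1 / q) := by
                apply Finset.sum_congr rfl
                intro t _
                have h1 : ∀ m : Fin M, ((1 / lam t) * (K t m).trace) ^ q
                    = (1 / lam t) ^ q * (K t m).trace ^ q := fun m =>
                  Real.mul_rpow (one_div_nonneg.mpr (hlam t).le) (psd_trace_nonneg (hK t m))
                rw [Finset.sum_congr rfl fun m _ => h1 m, ← Finset.mul_sum,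
                  Real.mul_rpow (Real.rpow_nonneg (one_div_nonneg.mpr (hlam t).le) q)
                    (Finset.sum_nonneg fun m _ =>
                      Real.rpow_nonneg (psd_trace_nonneg (hK t m)) q)]
                congr 1
                rw [← Real.rpow_mul (one_div_nonneg.mpr (hlam t).le), mul_one_div,
                  div_self hq0.ne', Real.rpow_one]
  calc ∑ σ : Fin T → Fin N → Bool, (1 / C) * (∑ m, (uu K lam σ m) ^ q) ^ (1 / q)
      ≤ (∑ σ : Fin T → Fin N → Bool,
          (1 / C) * ((∑ m, (uu K lam σ m) ^ q) ^ (1 / q)) ^ q) ^ (1 / q) := step1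
    _ ≤ (∑ m, (2 * q * (∑ t, (1 / lam t) * (K t m).trace)) ^ q) ^ (1 / q) := by
        apply Real.rpow_le_rpow _ step2 (by positivity)
        exact Finset.sum_nonneg fun σ _ => mul_nonneg (by positivity)
          (Real.rpow_nonneg (hGnn σ) q)
    _ ≤ 2 * q * (∑ t, (1 / lam t) * (∑ m, (K t m).trace ^ q) ^ (1 / q)) := step3


end MKL

open MKL Finset in
/-- Theorem: trace bound for the `L_p`-norm MKL multi-task Rademacher
complexity: for `p > 1`, `p* = p/(p-1)`, and `v_t = (tr K_t^1, …, tr K_t^M)`,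
`R(F_λ) ≤ (2 √(2 R p*)/(TN)) √(∑_t (1/λ_t) ‖v_t‖_{p*})`. -/
theorem dualRadComplexity_trace_bound {T N M : ℕ} (hT : 0 < T) (hN : 0 < N) (hM : 0 < M)
    (K : Fin T → Fin M → Matrix (Fin N) (Fin N) ℝ)
    (hK : ∀ t m, (K t m).PosSemidef)
    (R : ℝ) (hR : 0 < R) (lam : Fin T → ℝ) (hlam : ∀ t, 0 < lam t)
    (p : ℝ) (hp : 1 < p) :
    dualRadComplexity K R lam p ≤
      (2 * Real.sqrt (2 * R * (p / (p - 1))) / (T * N)) *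
        Real.sqrt (∑ t, (1 / lam t) *
          (∑ m, (K t m).trace ^ (p / (p - 1))) ^ (1 / (p / (p - 1)))) := by
  classical
  set q : ℝ := p / (p - 1) with hqdef
  have hpq : p.HolderConjugate q := Real.HolderConjugate.conjExponent hp
  have hq1 : 1 < q := hpq.symm.lt
  set C : ℝ := (2:ℝ) ^ (T * N) with hC
  have hCpos : 0 < C := by positivity
  set G : (Fin T → Fin N → Bool) → ℝ := fun σ => (∑ m, (uu K lam σ m) ^ q) ^ (1 / q) with hG
  have hGnn : ∀ σ, 0 ≤ G σ := fun σ =>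
    Real.rpow_nonneg (Finset.sum_nonneg fun m _ =>
      Real.rpow_nonneg (uu_nonneg hK hlam σ m) q) _
  set Sig : ℝ := ∑ t, (1 / lam t) * (∑ m, (K t m).trace ^ q) ^ (1 / q) with hSig
  have hSignn : 0 ≤ Sig := by
    apply Finset.sum_nonneg
    intro t _
    apply mul_nonneg (one_div_nonneg.mpr (hlam t).le)
    apply Real.rpow_nonneg
    apply Finset.sum_nonneg
    intro m _
    exact Real.rpow_nonneg (psd_trace_nonneg (hK t m)) q
  -- Step 1 : bound each sSup
  have h1 : ∀ σ : Fin T → Fin N → Bool,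
      sSup {v : ℝ | ∃ θ : Fin M → ℝ, (∀ m, 0 ≤ θ m) ∧ (∑ m, θ m ^ p) ^ (1 / p) ≤ 1 ∧
        ∃ α : Fin T → Fin N → ℝ,
          (∑ t, α t ⬝ᵥ (mixKernel K θ t).mulVec (α t)) ≤ R ∧
          v = ∑ t, (1 / Real.sqrt (lam t)) *
            (sgnVec (σ t) ⬝ᵥ (mixKernel K θ t).mulVec (α t))}
      ≤ Real.sqrt (R * G σ) := by
    intro σ
    exact Real.sSup_le (fun v hv => sup_bound hK hR hlam hpq σ v hv) (Real.sqrt_nonneg _)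
  -- Step 2 : sum over σ of √(R G σ)
  have h5 : ∑ σ : Fin T → Fin N → Bool, G σ ≤ C * (2 * q * Sig) := by
    have := G_avg hK hlam hq1 (K := K)
    have h5' : (1 / C) * ∑ σ : Fin T → Fin N → Bool, G σ ≤ 2 * q * Sig := by
      rw [Finset.mul_sum]
      exact this
    calc ∑ σ : Fin T → Fin N → Bool, G σ
        = C * ((1 / C) * ∑ σ : Fin T → Fin N → Bool, G σ) := by
          field_simp
      _ ≤ C * (2 * q * Sig) := mul_le_mul_of_nonneg_left h5' hCpos.le
  have h4 : ∑ σ : Fin T → Fin N → Bool, Real.sqrt (G σ)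
      ≤ Real.sqrt (∑ σ : Fin T → Fin N → Bool, G σ) * Real.sqrt C := by
    have := Real.sum_sqrt_mul_sqrt_le (univ : Finset (Fin T → Fin N → Bool))
      (f := G) (g := fun _ => 1) hGnn (fun _ => zero_le_one)
    simpa [card_sign T N, hC] using this
  have h6 : ∑ σ : Fin T → Fin N → Bool, Real.sqrt (R * G σ)
      ≤ C * Real.sqrt (2 * R * q * Sig) := by
    calc ∑ σ : Fin T → Fin N → Bool, Real.sqrt (R * G σ)
        = Real.sqrt R * ∑ σ : Fin T → Fin N → Bool, Real.sqrt (G σ) := by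
          rw [Finset.mul_sum]
          exact Finset.sum_congr rfl fun σ _ => by rw [Real.sqrt_mul hR.le]
      _ ≤ Real.sqrt R * (Real.sqrt (∑ σ : Fin T → Fin N → Bool, G σ) * Real.sqrt C) := by
          apply mul_le_mul_of_nonneg_left h4 (Real.sqrt_nonneg _)
      _ ≤ Real.sqrt R * (Real.sqrt (C * (2 * q * Sig)) * Real.sqrt C) := by
          apply mul_le_mul_of_nonneg_left _ (Real.sqrt_nonneg _)
          apply mul_le_mul_of_nonneg_right (Real.sqrt_le_sqrt h5) (Real.sqrt_nonneg _)
      _ = (Real.sqrt C * Real.sqrt C) * (Real.sqrt R * Real.sqrt (2 * q * Sig)) := by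
          rw [Real.sqrt_mul hCpos.le]
          ring
      _ = C * Real.sqrt (R * (2 * q * Sig)) := by
          rw [Real.mul_self_sqrt hCpos.le, ← Real.sqrt_mul hR.le]
      _ = C * Real.sqrt (2 * R * q * Sig) := by
          rw [show R * (2 * q * Sig) = 2 * R * q * Sig by ring]
  -- final assembly
  unfold dualRadComplexity
  rw [← hC]
  calc (2 / ((T:ℝ) * N)) * ((1 / C) * ∑ σ : Fin T → Fin N → Bool,
        sSup {v : ℝ | ∃ θ : Fin M → ℝ, (∀ m, 0 ≤ θ m) ∧ (∑ m, θ m ^ p) ^ (1 / p) ≤ 1 ∧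
          ∃ α : Fin T → Fin N → ℝ,
            (∑ t, α t ⬝ᵥ (mixKernel K θ t).mulVec (α t)) ≤ R ∧
            v = ∑ t, (1 / Real.sqrt (lam t)) *
              (sgnVec (σ t) ⬝ᵥ (mixKernel K θ t).mulVec (α t))})
      ≤ (2 / ((T:ℝ) * N)) * ((1 / C) * (C * Real.sqrt (2 * R * q * Sig))) := by
        apply mul_le_mul_of_nonneg_left _ (by positivity)
        apply mul_le_mul_of_nonneg_left _ (by positivity)
        exact le_trans (Finset.sum_le_sum fun σ _ => h1 σ) h6
    _ = (2 * Real.sqrt (2 * R * q) / ((T:ℝ) * N)) * Real.sqrt Sig := by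
        rw [Real.sqrt_mul (by positivity : (0:ℝ) ≤ 2 * R * q) Sig]
        field_simp
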